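/- arXiv:2503.05003 — 4 statements merged into one kernel-verified Lean document; each statement's English description precedes it below -/
import Mathlib

section
/- (Cleaning lemma) Let H_X ∈ F₂^{r×n}, let V ⊆ {1,…,n}, and let ∂₁ be the restriction of H_X to columns in V. Suppose w ∈ F₂^n is such that the restriction w|_V is orthogonal (under the standard F₂ bilinear form) to every element of ker(∂₁). Then there exists s in the row space of H_X such that (w + s)|_V = 0, i.e. w can be cleaned off V by adding a row-space element of H_X. -/
/-- Any linear functional on a finite product is given by a coefficient vector. -/
lemma linear_functional_eq_sum {m : ℕ} (ψ : (Fin m → ZMod 2) →ₗ[ZMod 2] ZMod 2)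
    (g : Fin m → ZMod 2) : ψ g = ∑ i, g i * ψ (Pi.single i 1) := by
  conv_lhs => rw [← Finset.univ_sum_single g]
  rw [map_sum]
  refine Finset.sum_congr rfl fun i _ => ?_
  have : Pi.single i (g i) = g i • (Pi.single i 1 : Fin m → ZMod 2) := by
    funext k
    by_cases h : k = i <;> simp [Pi.single_apply, h]
  rw [this, map_smul, smul_eq_mul]

/-- **Cleaning lemma.** If the restriction `w|_V` is orthogonal to every element of
`ker ∂₁` (where `∂₁` is `H_X` restricted to the columns in `V`), then there is an
element `s` of the row space of `H_X` such that `(w + s)|_V = 0`. -/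
theorem cleaning_lemma {r n : ℕ}
    (HX : Matrix (Fin r) (Fin n) (ZMod 2)) (V : Finset (Fin n))
    (w : Fin n → ZMod 2)
    (horth : ∀ u : {j // j ∈ V} → ZMod 2,
      Matrix.mulVec (Matrix.of fun (i : Fin r) (j : {j // j ∈ V}) => HX i j.1) u = 0 →
      ∑ j : {j // j ∈ V}, w j.1 * u j = 0) :
    ∃ c : Fin r → ZMod 2, ∀ j ∈ V, (w + Matrix.vecMul c HX) j = 0 := by
  classical
  set A : Matrix (Fin r) {j // j ∈ V} (ZMod 2) :=
    Matrix.of fun (i : Fin r) (j : {j // j ∈ V}) => HX i j.1 with hA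
  set f : ({j // j ∈ V} → ZMod 2) →ₗ[ZMod 2] (Fin r → ZMod 2) := A.mulVecLin with hf
  set φ : ({j // j ∈ V} → ZMod 2) →ₗ[ZMod 2] ZMod 2 :=
    { toFun := fun u => ∑ j : {j // j ∈ V}, w j.1 * u j
      map_add' := by
        intro x y
        simp [mul_add, Finset.sum_add_distrib]
      map_smul' := by
        intro m x
        simp [Finset.mul_sum, mul_comm, mul_left_comm] } with hφ
  have hker : LinearMap.ker f ≤ LinearMap.ker φ := by
    intro u hu
    simp only [LinearMap.mem_ker] at hu ⊢
    exact horth u hu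
  -- factor φ through f
  have hfactor : ∃ ψ : (Fin r → ZMod 2) →ₗ[ZMod 2] ZMod 2, ∀ x, ψ (f x) = φ x := by
    set ψ₀ : LinearMap.range f →ₗ[ZMod 2] ZMod 2 :=
      ((LinearMap.ker f).liftQ φ hker).comp f.quotKerEquivRange.symm.toLinearMap with hψ₀
    obtain ⟨ψ, hψ⟩ := LinearMap.exists_extend ψ₀
    refine ⟨ψ, fun x => ?_⟩
    have h1 : ψ (f x) = ψ₀ ⟨f x, LinearMap.mem_range_self f x⟩ := by
      have := congrArg (fun g => g ⟨f x, LinearMap.mem_range_self f x⟩) hψ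
      simpa using this
    rw [h1, hψ₀]
    have h2 : f.quotKerEquivRange.symm ⟨f x, LinearMap.mem_range_self f x⟩ =
        Submodule.Quotient.mk x := by
      rw [LinearEquiv.symm_apply_eq]
      exact Subtype.ext (f.quotKerEquivRange_apply_mk x).symm
    simp [h2]
  obtain ⟨ψ, hψ⟩ := hfactor
  refine ⟨fun i => ψ (Pi.single i 1), fun j hj => ?_⟩
  have key : Matrix.vecMul (fun i => ψ (Pi.single i 1)) HX j = w j := by
    have hcol : f (Pi.single ⟨j, hj⟩ 1) = fun i => A i ⟨j, hj⟩ := by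
      funext i
      simp [hf, Matrix.mulVecLin_apply, Matrix.mulVec_single]
    have h3 : ψ (f (Pi.single ⟨j, hj⟩ 1)) = φ (Pi.single ⟨j, hj⟩ 1) := hψ _
    rw [hcol, linear_functional_eq_sum ψ] at h3
    have h4 : φ (Pi.single ⟨j, hj⟩ 1) = w j := by
      simp [hφ, Pi.single_apply, mul_comm]
    rw [h4] at h3
    rw [Matrix.vecMul, ← h3]
    simp [dotProduct, hA, mul_comm]
  have : w j + w j = 0 := by
    have : (2 : ZMod 2) = 0 := rfl
    ring_nf
    rw [mul_comm]
    simp [this]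
  simp [Pi.add_apply, key, this]
end

section
/- (No-overlap corollary) Let H_X, H_Z define a CSS code (H_X H_Z^T = 0) with Z-logical space L_Z = ker(H_X) and Z-stabiliser space S_Z = rowspace(H_Z) ⊆ L_Z. Suppose v₁,…,v_k ∈ L_Z are representatives as in the staircase basis lemma, and let x̄₁,…,x̄_k ∈ ker(H_Z) be X-logical representatives dual to the v_i (i.e. ⟨x̄_i, v_j⟩ = δ_{ij} mod stabilisers). Then for any I ⊆ {1,…,k} and any j ∉ I, there exists an X-stabiliser s (in the row space of H_X) such that supp(x̄_j + s) ∩ ∪_{i∈I} supp(v_i) = ∅. -/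
/-- A linear functional vanishing on the kernel of `A` factors through `A`. -/
lemma exists_comp_of_ker_le' {K V W : Type*} [Field K] [AddCommGroup V] [Module K V]
    [AddCommGroup W] [Module K W] (A : V →ₗ[K] W) (φ : V →ₗ[K] K)
    (h : LinearMap.ker A ≤ LinearMap.ker φ) : ∃ g : W →ₗ[K] K, ∀ x, g (A x) = φ x := by
  obtain ⟨g, hg⟩ := LinearMap.exists_extend
    ((((LinearMap.ker A).liftQ φ h).comp (A.quotKerEquivRange).symm.toLinearMap))
  refine ⟨g, fun x => ?_⟩
  have h1 : (⟨A x, LinearMap.mem_range_self A x⟩ : LinearMap.range A)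
      = A.quotKerEquivRange (Submodule.Quotient.mk x) := by
    ext
    simp [LinearMap.quotKerEquivRange_apply_mk]
  have := congrArg (fun m => m (⟨A x, LinearMap.mem_range_self A x⟩ : LinearMap.range A)) hg
  simpa [h1] using this

/-- **No-overlap corollary.** For a CSS code with staircase `Z`-logical
representatives `v₁,…,v_k` (pivot conditions and spanning of `ker H_X` modulo the
`Z`-stabiliser row space) and dual `X`-logical representatives `x̄₁,…,x̄_k`, for any
`I ⊆ [k]` and `j ∉ I` there is an `X`-stabiliser `s` (row space of `H_X`) with
`supp(x̄_j + s) ∩ ⋃_{i∈I} supp(v_i) = ∅`. -/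
theorem no_overlap_corollary {rX rZ n k : ℕ}
    (HX : Matrix (Fin rX) (Fin n) (ZMod 2)) (HZ : Matrix (Fin rZ) (Fin n) (ZMod 2))
    (hCSS : HX * HZ.transpose = 0)
    (v : Fin k → Fin n → ZMod 2) (hvL : ∀ i, HX.mulVec (v i) = 0)
    (piv : Fin k → Fin n) (hpivinj : Function.Injective piv)
    (hpivS : ∀ (a : Fin rZ → ZMod 2) (t : Fin k), Matrix.vecMul a HZ (piv t) = 0)
    (hpivv : ∀ i t, v i (piv t) = if i = t then 1 else 0)
    (hspan : ∀ z : Fin n → ZMod 2, HX.mulVec z = 0 →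
      ∃ (c : Fin k → ZMod 2) (a : Fin rZ → ZMod 2),
        z = (∑ i, c i • v i) + Matrix.vecMul a HZ)
    (xb : Fin k → Fin n → ZMod 2) (hxb : ∀ i, HZ.mulVec (xb i) = 0)
    (hpair : ∀ i j, ∑ x, xb i x * v j x = if i = j then 1 else 0)
    (I : Finset (Fin k)) (j : Fin k) (hj : j ∉ I) :
    ∃ c : Fin rX → ZMod 2,
      ∀ x : Fin n, (xb j + Matrix.vecMul c HX) x ≠ 0 → ¬ ∃ i ∈ I, v i x ≠ 0 := by
  classical
  -- the region `V` = union of supports of the `v i`, `i ∈ I`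
  set V : Set (Fin n) := {x | ∃ i ∈ I, v i x ≠ 0} with hV
  -- projection onto coordinates in `V`
  let P : (Fin n → ZMod 2) →ₗ[ZMod 2] (Fin n → ZMod 2) :=
  { toFun := fun y x => if x ∈ V then y x else 0
    map_add' := by intro y z; funext x; by_cases h : x ∈ V <;> simp [h]
    map_smul' := by intro c y; funext x; by_cases h : x ∈ V <;> simp [h] }
  -- the restricted boundary map
  let A : (Fin n → ZMod 2) →ₗ[ZMod 2] (Fin rX → ZMod 2) := (Matrix.mulVecLin HX).comp P
  -- the functional `⟨x̄ j, P ·⟩`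
  let φ : (Fin n → ZMod 2) →ₗ[ZMod 2] ZMod 2 :=
  { toFun := fun y => ∑ x, xb j x * (P y) x
    map_add' := by
      intro y z
      simp only [map_add, Pi.add_apply, mul_add]
      rw [Finset.sum_add_distrib]
    map_smul' := by
      intro c y
      simp only [map_smul, Pi.smul_apply, smul_eq_mul, RingHom.id_apply]
      rw [Finset.mul_sum]
      congr 1; funext x; ring }
  have hker : LinearMap.ker A ≤ LinearMap.ker φ := by
    intro y hy
    have hy' : HX.mulVec (P y) = 0 := hy
    obtain ⟨c, a, hca⟩ := hspan (P y) hy'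
    -- coefficients outside `I` vanish
    have hc : ∀ t, t ∉ I → c t = 0 := by
      intro t ht
      have hpt : piv t ∉ V := by
        intro hmem
        obtain ⟨i, hi, hvi⟩ := hmem
        rw [hpivv] at hvi
        have : i = t := by by_contra h; simp [h] at hvi
        exact ht (this ▸ hi)
      have h0 : (P y) (piv t) = 0 := by simp only [P]; simp [hpt]
      have := congrFun hca (piv t)
      rw [h0] at this
      have hsum : (∑ i, c i • v i) (piv t) = c t := by
        simp only [Finset.sum_apply, Pi.smul_apply, smul_eq_mul, hpivv]
        simp
      rw [Pi.add_apply, hsum, hpivS a t, add_zero] at this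
      exact this.symm
    -- now compute `φ y`
    have : φ y = 0 := by
      show (∑ x, xb j x * (P y) x) = 0
      rw [hca]
      have : ∀ x, xb j x * ((∑ i, c i • v i) + Matrix.vecMul a HZ) x
          = (∑ i, c i * (xb j x * v i x)) + xb j x * Matrix.vecMul a HZ x := by
        intro x
        simp only [Pi.add_apply, Finset.sum_apply, Pi.smul_apply, smul_eq_mul, mul_add,
          Finset.mul_sum]
        congr 1
        · congr 1; funext i; ring
      simp only [this]
      rw [Finset.sum_add_distrib]
      have h1 : (∑ x, ∑ i, c i * (xb j x * v i x)) = 0 := by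
        rw [Finset.sum_comm]
        have : ∀ i, (∑ x, c i * (xb j x * v i x)) = c i * (if j = i then 1 else 0) := by
          intro i
          rw [← Finset.mul_sum, hpair]
        simp only [this]
        apply Finset.sum_eq_zero
        intro i _
        by_cases hij : j = i
        · subst hij; rw [hc j hj]; ring
        · simp [hij]
      have h2 : (∑ x, xb j x * Matrix.vecMul a HZ x) = 0 := by
        have : ∀ x, xb j x * Matrix.vecMul a HZ x = ∑ r, a r * (HZ r x * xb j x) := by
          intro x
          simp only [Matrix.vecMul, dotProduct, Finset.sum_mul, Finset.mul_sum]
          congr 1; funext r; ring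
        simp only [this]
        rw [Finset.sum_comm]
        have : ∀ r, (∑ x, a r * (HZ r x * xb j x)) = a r * (HZ.mulVec (xb j)) r := by
          intro r
          rw [← Finset.mul_sum]
          rfl
        simp only [this, hxb j]
        simp
      rw [h1, h2, add_zero]
    exact this
  obtain ⟨g, hg⟩ := exists_comp_of_ker_le' A φ hker
  -- extract the stabiliser coefficients
  refine ⟨fun r => g (fun s => if r = s then 1 else 0), fun x hx => ?_⟩
  intro hmem
  apply hx
  -- `x ∈ V`; evaluate on the basis vector `e_x`
  have hxV : x ∈ V := hmem
  set e : Fin n → ZMod 2 := fun x' => if x = x' then 1 else 0 with he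
  have hPe : P e = e := by
    funext x'
    simp only [P, LinearMap.coe_mk, AddHom.coe_mk]
    by_cases h : x' ∈ V
    · simp [h]
    · have : x ≠ x' := fun hxx => h (hxx ▸ hxV)
      simp [h, he, this]
  have hφe : φ e = xb j x := by
    show (∑ x', xb j x' * (P e) x') = xb j x
    rw [hPe]
    simp [he, Finset.sum_ite_eq, mul_comm]
  have hAe : A e = fun r => HX r x := by
    funext r
    show HX.mulVec (P e) r = HX r x
    rw [hPe]
    simp [Matrix.mulVec, dotProduct, he, mul_comm]
  have hge : g (A e) = φ e := hg e
  rw [hAe, hφe] at hge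
  have hgexp := LinearMap.pi_apply_eq_sum_univ g (fun r => HX r x)
  rw [hgexp] at hge
  -- `vecMul c HX x = ∑ r, HX r x • g (e_r) = xb j x`
  have hvecmul : Matrix.vecMul (fun r => g (fun s => if r = s then 1 else 0)) HX x
      = xb j x := by
    rw [← hge]
    simp only [Matrix.vecMul, dotProduct, smul_eq_mul]
    congr 1; funext r; ring
  show (xb j + Matrix.vecMul _ HX) x = 0
  rw [Pi.add_apply, hvecmul]
  exact CharTwo.add_self_eq_zero (xb j x)
end

section
/- (Z-distance preservation under branching, weight argument) Let Q be a CSS code with Z-distance d. Form the deformed code by attaching a 2-layer branching sticker as above. Then any Z-logical operator of the deformed code whose restriction to the original qubits is a nontrivial Z-logical of Q has weight at least d. More precisely: multiplying a Z-operator λ supported on Q by any product of new Z-checks removes weight w from the original qubits and layer-1 qubits only at the cost of adding weight at least w on layer-2 (X-layer) qubits, so the total weight cannot drop below d. -/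
/-!
Every new `Z`-check has exactly one layer-2 coordinate, and distinct checks have distinct
ones, so on layer 2 the product of the selected checks is the selection vector `c` itself.
An original qubit `j` can therefore differ from `λ` only if some selected check `i` acts on
it (`q i = j`), and then layer-2 qubit `i` is occupied. Charging each lost original qubit to
such a layer-2 qubit shows that the weight never drops below `|λ| ≥ d`.
-/

open Finset Sum

section Sticker

variable {α γ β R : Type*} [Fintype β]

theorem card_filter_ne_zero_le_of_eq_off_image [Fintype α] [Fintype γ] [DecidableEq α]
    [Zero R] [DecidableEq R] (lam : α → R) (v : α ⊕ (γ ⊕ β) → R) (q : β → α)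
    (hv : ∀ j, (∀ i, q i = j → v (inr (inr i)) = 0) → v (inl j) = lam j) :
    #{j | lam j ≠ 0} ≤ #{x | v x ≠ 0} := by
  set A : Finset α := {j | v (inl j) ≠ 0}
  set B : Finset β := {i | v (inr (inr i)) ≠ 0}
  have hcover : ({j | lam j ≠ 0} : Finset α) ⊆ A ∪ B.image q := by
    intro j hj
    by_contra hjAB
    simp only [A, B, mem_union, mem_image, mem_filter, mem_univ, true_and, not_or, not_not,
      not_exists, not_and] at hj hjAB
    exact hj ((hv j fun i hi => by_contra fun h => hjAB.2 i h hi).symm.trans hjAB.1)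
  have hembed : A.disjSum (B.map .inr) ⊆ ({x | v x ≠ 0} : Finset (α ⊕ (γ ⊕ β))) := by
    rintro (j | k | i) hx <;> simp_all [A, B]
  calc #{j | lam j ≠ 0} ≤ #(A ∪ B.image q) := card_le_card hcover
    _ ≤ #A + #B := (card_union_le _ _).trans (Nat.add_le_add_left card_image_le _)
    _ = #(A.disjSum (B.map .inr)) := by rw [card_disjSum, card_map]
    _ ≤ #{x | v x ≠ 0} := card_le_card hembed

variable [DecidableEq α] [DecidableEq β] [Semiring R]

/-- Qubits of the deformed code: original `α`, layer-1 `γ`, layer-2 `β`. -/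
def stickerZCheck (q : β → α) (D : Matrix γ β R) (i : β) : α ⊕ (γ ⊕ β) → R :=
  Sum.elim (fun j => if j = q i then 1 else 0)
    (Sum.elim (fun a => D a i) (fun j' => if j' = i then 1 else 0))

def stickerDressedOperator (lam : α → R) (q : β → α) (D : Matrix γ β R) (c : β → R) :
    α ⊕ (γ ⊕ β) → R :=
  Sum.elim lam (Sum.elim (fun _ => 0) (fun _ => 0)) + ∑ i, c i • stickerZCheck q D i

variable (lam : α → R) (q : β → α) (D : Matrix γ β R) (c : β → R)

theorem stickerDressedOperator_inr_inr (i : β) :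
    stickerDressedOperator lam q D c (inr (inr i)) = c i := by
  simp [stickerDressedOperator, stickerZCheck, Finset.sum_apply]

theorem stickerDressedOperator_inl_of_forall {j : α} (hj : ∀ i, q i = j → c i = 0) :
    stickerDressedOperator lam q D c (inl j) = lam j := by
  simp only [stickerDressedOperator, stickerZCheck, Pi.add_apply, Finset.sum_apply,
    Pi.smul_apply, elim_inl, smul_eq_mul, mul_ite, mul_one, mul_zero]
  rw [Finset.sum_eq_zero fun i _ => ite_eq_right_iff.2 fun h => hj i h.symm, add_zero]

theorem card_filter_ne_zero_le_stickerDressedOperator [Fintype α] [Fintype γ] [DecidableEq R] :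
    #{j | lam j ≠ 0} ≤ #{x | stickerDressedOperator lam q D c x ≠ 0} :=
  card_filter_ne_zero_le_of_eq_off_image lam _ q fun _ hj =>
    stickerDressedOperator_inl_of_forall lam q D c fun i hi => by
      simpa only [stickerDressedOperator_inr_inr] using hj i hi

end Sticker

theorem branching_preserves_Z_distance_general {rX rZ n r m : ℕ}
    (HX : Matrix (Fin rX) (Fin n) (ZMod 2)) (HZ : Matrix (Fin rZ) (Fin n) (ZMod 2))
    (d : ℕ)
    (hdist : ∀ z : Fin n → ZMod 2, HX.mulVec z = 0 →
      (¬ ∃ a : Fin rZ → ZMod 2, Matrix.vecMul a HZ = z) →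
      d ≤ (Finset.univ.filter (fun x : Fin n => z x ≠ 0)).card)
    (q : Fin m → Fin n)
    (D : Matrix (Fin r) (Fin m) (ZMod 2))
    (lam : Fin n → ZMod 2) (hlam1 : HX.mulVec lam = 0)
    (hlam2 : ¬ ∃ a : Fin rZ → ZMod 2, Matrix.vecMul a HZ = lam)
    (c : Fin m → ZMod 2) :
    d ≤ (Finset.univ.filter (fun x : Fin n ⊕ (Fin r ⊕ Fin m) =>
      ((Sum.elim lam (Sum.elim (fun _ => (0 : ZMod 2)) (fun _ => (0 : ZMod 2)))
          : Fin n ⊕ (Fin r ⊕ Fin m) → ZMod 2) +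
        ∑ i : Fin m, c i •
          (Sum.elim (fun j => if j = q i then (1 : ZMod 2) else 0)
            (Sum.elim (fun a => D a i) (fun j' => if j' = i then 1 else 0)))) x ≠ 0)).card :=
  (hdist lam hlam1 hlam2).trans (card_filter_ne_zero_le_stickerDressedOperator lam q D c)

/-- **Z-distance preservation under branching.** Let `Q` be a CSS code whose
nontrivial `Z`-logicals all have weight at least `d`.  Attach a 2-layer branching
sticker: new `Z`-check `i` acts on original qubit `q i` (with `q` injective), on
layer-1 qubits via column `i` of `D`, and on layer-2 qubit `i` (exactly one layer-2
coordinate, distinct for distinct checks).  Then for any nontrivial `Z`-logical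
`lam` of `Q` and any product of new `Z`-checks (selected by `c`), the resulting
operator on the deformed qubit set has weight at least `d`. -/
theorem branching_preserves_Z_distance {rX rZ n r m : ℕ}
    (HX : Matrix (Fin rX) (Fin n) (ZMod 2)) (HZ : Matrix (Fin rZ) (Fin n) (ZMod 2))
    (hCSS : HX * HZ.transpose = 0) (d : ℕ)
    (hdist : ∀ z : Fin n → ZMod 2, HX.mulVec z = 0 →
      (¬ ∃ a : Fin rZ → ZMod 2, Matrix.vecMul a HZ = z) →
      d ≤ (Finset.univ.filter (fun x : Fin n => z x ≠ 0)).card)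
    (q : Fin m → Fin n) (hq : Function.Injective q)
    (D : Matrix (Fin r) (Fin m) (ZMod 2))
    (lam : Fin n → ZMod 2) (hlam1 : HX.mulVec lam = 0)
    (hlam2 : ¬ ∃ a : Fin rZ → ZMod 2, Matrix.vecMul a HZ = lam)
    (c : Fin m → ZMod 2) :
    d ≤ (Finset.univ.filter (fun x : Fin n ⊕ (Fin r ⊕ Fin m) =>
      ((Sum.elim lam (Sum.elim (fun _ => (0 : ZMod 2)) (fun _ => (0 : ZMod 2)))
          : Fin n ⊕ (Fin r ⊕ Fin m) → ZMod 2) +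
        ∑ i : Fin m, c i •
          (Sum.elim (fun j => if j = q i then (1 : ZMod 2) else 0)
            (Sum.elim (fun a => D a i) (fun j' => if j' = i then 1 else 0)))) x ≠ 0)).card :=
  branching_preserves_Z_distance_general HX HZ d hdist q D lam hlam1 hlam2 c
end

section
/- (X-distance preservation under branching) Let Q be a CSS code with X-distance d. In the branched code, all new X-checks are supported only on new (ancilla) qubits, and old X-checks are only extended onto new qubits. Therefore, for any nontrivial X-logical Λ of Q and any product C of (possibly deformed) X-checks of the branched code, the restriction of C·Λ to the original qubits of Q equals the product of Λ with a product of original X-stabilisers of Q, and hence has weight at least d. Consequently the X-distance of the branched code is at least d. -/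
/-- **X-distance preservation under branching.** The branched code's `X`-check
matrix has block form `fromBlocks H_X E 0 N`: old checks extended onto new qubits
by `E`, and new checks `N` supported entirely on new qubits.  Hence for any
nontrivial `X`-logical `Λ` of `Q` and any product of deformed `X`-checks, the
restriction to the original qubits equals `Λ` plus an original `X`-stabiliser, and
therefore has weight at least the `X`-distance `d`. -/
theorem branching_preserves_X_distance {rX rZ n nA s : ℕ}
    (HX : Matrix (Fin rX) (Fin n) (ZMod 2)) (HZ : Matrix (Fin rZ) (Fin n) (ZMod 2))
    (hCSS : HX * HZ.transpose = 0) (d : ℕ)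
    (hdist : ∀ x : Fin n → ZMod 2, HZ.mulVec x = 0 →
      (¬ ∃ c : Fin rX → ZMod 2, Matrix.vecMul c HX = x) →
      d ≤ (Finset.univ.filter (fun j : Fin n => x j ≠ 0)).card)
    (E : Matrix (Fin rX) (Fin nA) (ZMod 2)) (N : Matrix (Fin s) (Fin nA) (ZMod 2))
    (Lam : Fin n → ZMod 2) (hLam1 : HZ.mulVec Lam = 0)
    (hLam2 : ¬ ∃ c : Fin rX → ZMod 2, Matrix.vecMul c HX = Lam)
    (c1 : Fin rX → ZMod 2) (c2 : Fin s → ZMod 2) :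
    (∀ j : Fin n,
      ((Sum.elim Lam (fun _ => (0 : ZMod 2)) : Fin n ⊕ Fin nA → ZMod 2)
        + Matrix.vecMul (Sum.elim c1 c2) (Matrix.fromBlocks HX E 0 N)) (Sum.inl j)
      = (Lam + Matrix.vecMul c1 HX) j) ∧
    d ≤ (Finset.univ.filter (fun j : Fin n =>
      ((Sum.elim Lam (fun _ => (0 : ZMod 2)) : Fin n ⊕ Fin nA → ZMod 2)
        + Matrix.vecMul (Sum.elim c1 c2) (Matrix.fromBlocks HX E 0 N)) (Sum.inl j) ≠ 0)).card := by
  have key : ∀ j : Fin n,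
      ((Sum.elim Lam (fun _ => (0 : ZMod 2)) : Fin n ⊕ Fin nA → ZMod 2)
        + Matrix.vecMul (Sum.elim c1 c2) (Matrix.fromBlocks HX E 0 N)) (Sum.inl j)
      = (Lam + Matrix.vecMul c1 HX) j := by
    intro j
    simp only [Pi.add_apply, Sum.elim_inl, Matrix.vecMul, dotProduct,
      Fintype.sum_sum_type, Matrix.fromBlocks_apply₁₁, Matrix.fromBlocks_apply₂₁,
      Sum.elim_inl, Sum.elim_inr, Matrix.zero_apply, mul_zero, Finset.sum_const_zero,
      add_zero]
  refine ⟨key, ?_⟩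
  have h0 : HZ.mulVec (Lam + Matrix.vecMul c1 HX) = 0 := by
    have hz : HZ.mulVec (Matrix.vecMul c1 HX) = 0 := by
      rw [← Matrix.mulVec_transpose, Matrix.mulVec_mulVec]
      have h2 : HZ * HX.transpose = 0 := by
        have := congrArg Matrix.transpose hCSS
        simpa [Matrix.transpose_mul] using this
      rw [h2, Matrix.zero_mulVec]
    rw [Matrix.mulVec_add, hLam1, hz, add_zero]
  have h1 : ¬ ∃ c : Fin rX → ZMod 2, Matrix.vecMul c HX = Lam + Matrix.vecMul c1 HX := by
    rintro ⟨c, hc⟩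
    apply hLam2
    refine ⟨c + c1, ?_⟩
    rw [Matrix.add_vecMul, hc]
    ext j
    simp only [Pi.add_apply]
    ring_nf
    rw [show ((2 : ZMod 2) = 0) from rfl]
    ring
  calc d ≤ _ := hdist _ h0 h1
    _ ≤ _ := by
        apply le_of_eq
        congr 1
        apply Finset.filter_congr
        intro j _
        rw [key j]
end
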